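/- arXiv:1305.0089 — 2 statements merged into one kernel-verified Lean document; each statement's English description precedes it below -/
import Mathlib

section
/- (Theorem 1, interior case) Let u : ℝ → ℝ be any function. For every interior index 1 ≤ i ≤ n−1, the recovered gradient value satisfies g_i = (u(x_{i+1}) − u(x_{i−1}))/(x_{i+1} − x_{i−1}). -/
/-! `λ_i` vanishes off the two cells `[x_{i-1}, x_i]` and `[x_i, x_{i+1}]`, on which `u_h'` is the
constant slope of `u` across the cell. In the normalised variable `s = (t - p) / (q - p)` of a cell
with node `q = x_i` and other end `p`, `λ_i = 3 s - 1` and `φ_i = s`, and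
`∫₀¹ (3 s - 1) = ∫₀¹ s (3 s - 1) = 1/2`. So each cell contributes half its length times the slope
to the numerator and half its length to the denominator: the numerator is
`(u(x_{i+1}) - u(x_{i-1})) / 2` and the denominator is `(x_{i+1} - x_{i-1}) / 2`. -/

open intervalIntegral

/-- The standard hat (piecewise linear nodal) basis function `φ_i` associated with the
partition `x 0 < x 1 < ... < x n`.  The branch on `[x_{i-1}, x_i]` is omitted when `i = 0`
and the branch on `[x_i, x_{i+1}]` is omitted when `i = n`. -/
noncomputable def hatFn (x : ℕ → ℝ) (n i : ℕ) : ℝ → ℝ := fun t =>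
  if 0 < i ∧ x (i-1) ≤ t ∧ t ≤ x i then (t - x (i-1)) / (x i - x (i-1))
  else if i < n ∧ x i ≤ t ∧ t ≤ x (i+1) then (x (i+1) - t) / (x (i+1) - x i)
  else 0

/-- The biorthogonal basis function `λ_i`. -/
noncomputable def biorthFn (x : ℕ → ℝ) (n i : ℕ) : ℝ → ℝ := fun t =>
  if 0 < i ∧ x (i-1) ≤ t ∧ t < x i then (2*(t - x (i-1)) + (t - x i)) / (x i - x (i-1))
  else if i < n ∧ x i ≤ t ∧ t < x (i+1) then (2*(t - x (i+1)) + (t - x i)) / (x i - x (i+1))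
  else 0

/-- The piecewise derivative `u_h'` of the interpolant `u_h = Σ_j u(x_j) φ_j`:
on each open subinterval `(x_j, x_{j+1})` it is the constant
`(u(x_{j+1}) - u(x_j)) / (x_{j+1} - x_j)`, and it is (arbitrarily) `0` at grid points and
outside `[x 0, x n]`. -/
noncomputable def interpDeriv (x : ℕ → ℝ) (n : ℕ) (u : ℝ → ℝ) : ℝ → ℝ := fun t =>
  ∑ j ∈ Finset.range n,
    if x j < t ∧ t < x (j+1) then (u (x (j+1)) - u (x j)) / (x (j+1) - x j) else 0

/-- The recovered gradient value
`g_i = (∫_α^β u_h' λ_i dx) / (∫_α^β φ_i λ_i dx)` with `α = x 0`, `β = x n`. -/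
noncomputable def recGrad (x : ℕ → ℝ) (n : ℕ) (u : ℝ → ℝ) (i : ℕ) : ℝ :=
  (∫ t in (x 0)..(x n), interpDeriv x n u t * biorthFn x n i t) /
  (∫ t in (x 0)..(x n), hatFn x n i t * biorthFn x n i t)

open Set
open MeasureTheory (volume)

theorem integral_comp_sub_div_sub (g : ℝ → ℝ) {p q : ℝ} (h : p ≠ q) :
    ∫ t in p..q, g ((t - p) / (q - p)) = (q - p) * ∫ s in (0:ℝ)..1, g s := by
  have hpq : q - p ≠ 0 := sub_ne_zero.mpr h.symm
  simp_rw [sub_div]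
  rw [integral_comp_div_sub g hpq, smul_eq_mul, sub_self, ← sub_div, div_self hpq]

theorem biorth_piece_eq_three_mul_sub_one (p q t : ℝ) (h : p ≠ q) :
    (2 * (t - p) + (t - q)) / (q - p) = 3 * ((t - p) / (q - p)) - 1 := by
  have hpq : q - p ≠ 0 := sub_ne_zero.mpr h.symm
  field_simp
  ring

theorem integral_biorth_piece {p q : ℝ} (h : p ≠ q) :
    ∫ t in p..q, (2 * (t - p) + (t - q)) / (q - p) = (q - p) / 2 := by
  simp_rw [biorth_piece_eq_three_mul_sub_one _ _ _ h]
  rw [integral_comp_sub_div_sub (fun s => 3 * s - 1) h, integral_sub, integral_const_mul]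
  · norm_num [mul_one_div]
  · exact (continuous_const.mul continuous_id).intervalIntegrable _ _
  · exact intervalIntegrable_const

theorem integral_hat_piece_mul_biorth_piece {p q : ℝ} (h : p ≠ q) :
    ∫ t in p..q, (t - p) / (q - p) * ((2 * (t - p) + (t - q)) / (q - p)) = (q - p) / 2 := by
  simp_rw [biorth_piece_eq_three_mul_sub_one _ _ _ h]
  rw [integral_comp_sub_div_sub (fun s => s * (3 * s - 1)) h]
  have hpoly : ∀ s : ℝ, s * (3 * s - 1) = 3 * s ^ 2 - s := fun s => by ring
  simp only [hpoly]
  rw [integral_sub, integral_const_mul] <;> norm_num [mul_one_div]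

section Cells

variable {x : ℕ → ℝ} {n : ℕ}

theorem eq_of_mem_Icc_of_mem_Ioo (hx : MonotoneOn x (Iic n)) {j k : ℕ} {t : ℝ} (hj : j < n)
    (hk : k < n) (htj : t ∈ Icc (x j) (x (j + 1))) (htk : t ∈ Ioo (x k) (x (k + 1))) :
    j = k := by
  rcases lt_trichotomy j k with hjk | rfl | hkj
  · have : x (j + 1) ≤ x k := hx (mem_Iic.2 (by omega)) (mem_Iic.2 hk.le) hjk
    exact absurd (htj.2.trans this) htk.1.not_ge
  · rfl
  · have : x (k + 1) ≤ x j := hx (mem_Iic.2 (by omega)) (mem_Iic.2 hj.le) hkj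
    exact absurd (htk.2.trans_le this) htj.1.not_gt

theorem interpDeriv_of_mem_Ioo (hx : MonotoneOn x (Iic n)) (u : ℝ → ℝ) {k : ℕ} {t : ℝ}
    (hk : k < n) (ht : t ∈ Ioo (x k) (x (k + 1))) :
    interpDeriv x n u t = (u (x (k + 1)) - u (x k)) / (x (k + 1) - x k) := by
  rw [interpDeriv, Finset.sum_eq_single_of_mem k (Finset.mem_range.2 hk), if_pos (mem_Ioo.1 ht)]
  intro j hj hjk
  exact if_neg fun htj =>
    hjk (eq_of_mem_Icc_of_mem_Ioo hx (Finset.mem_range.1 hj) hk (Ioo_subset_Icc_self htj) ht)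

theorem biorthFn_succ_of_mem_Ioo {j : ℕ} {t : ℝ} (ht : t ∈ Ioo (x j) (x (j + 1))) :
    biorthFn x n (j + 1) t = (2 * (t - x j) + (t - x (j + 1))) / (x (j + 1) - x j) := by
  simp only [biorthFn, Nat.add_sub_cancel]
  rw [if_pos ⟨j.succ_pos, ht.1.le, ht.2⟩]

theorem biorthFn_of_mem_Ioo {i : ℕ} {t : ℝ} (hi : i < n) (ht : t ∈ Ioo (x i) (x (i + 1))) :
    biorthFn x n i t = (2 * (t - x (i + 1)) + (t - x i)) / (x i - x (i + 1)) := by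
  rw [biorthFn, if_neg fun h => lt_asymm h.2.2 ht.1, if_pos ⟨hi, ht.1.le, ht.2⟩]

theorem hatFn_succ_of_mem_Ioo {j : ℕ} {t : ℝ} (ht : t ∈ Ioo (x j) (x (j + 1))) :
    hatFn x n (j + 1) t = (t - x j) / (x (j + 1) - x j) := by
  simp only [hatFn, Nat.add_sub_cancel]
  rw [if_pos ⟨j.succ_pos, ht.1.le, ht.2.le⟩]

theorem hatFn_of_mem_Ioo {i : ℕ} {t : ℝ} (hi : i < n) (ht : t ∈ Ioo (x i) (x (i + 1))) :
    hatFn x n i t = (x (i + 1) - t) / (x (i + 1) - x i) := by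
  rw [hatFn, if_neg fun h => lt_irrefl _ (ht.1.trans_le h.2.2), if_pos ⟨hi, ht.1.le, ht.2.le⟩]

theorem biorthFn_eq_zero_of_mem_Ioo (hx : MonotoneOn x (Iic n)) {i k : ℕ} {t : ℝ} (hi : i ≤ n)
    (hk : k < n) (ht : t ∈ Ioo (x k) (x (k + 1))) (hki : k + 1 ≠ i) (hik : i ≠ k) :
    biorthFn x n i t = 0 := by
  rw [biorthFn, if_neg, if_neg]
  · exact fun ⟨hin, hit, hti⟩ => hik (eq_of_mem_Icc_of_mem_Ioo hx hin hk ⟨hit, hti.le⟩ ht)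
  · rintro ⟨hi0, hit, hti⟩
    have hcell : t ∈ Icc (x (i - 1)) (x (i - 1 + 1)) := by
      rw [Nat.sub_add_cancel hi0]
      exact ⟨hit, hti.le⟩
    have := eq_of_mem_Icc_of_mem_Ioo hx (by omega) hk hcell ht
    omega

theorem integral_eq_add_of_eqOn_two_cells (hx : MonotoneOn x (Iic n)) {j : ℕ} (hj : j + 1 < n)
    {f L R : ℝ → ℝ} (hL : EqOn f L (Ioo (x j) (x (j + 1))))
    (hR : EqOn f R (Ioo (x (j + 1)) (x (j + 2))))
    (hzero : ∀ k < n, k ≠ j → k ≠ j + 1 → EqOn f 0 (Ioo (x k) (x (k + 1))))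
    (hLint : IntervalIntegrable L volume (x j) (x (j + 1)))
    (hRint : IntervalIntegrable R volume (x (j + 1)) (x (j + 2))) :
    ∫ t in x 0..x n, f t = (∫ t in x j..x (j + 1), L t) + ∫ t in x (j + 1)..x (j + 2), R t := by
  have hle : ∀ k < n, x k ≤ x (k + 1) := fun k hk =>
    hx (mem_Iic.2 hk.le) (mem_Iic.2 hk) k.le_succ
  have hcell : ∀ k < n, ∃ g : ℝ → ℝ, EqOn f g (Ioo (x k) (x (k + 1))) ∧
      IntervalIntegrable g volume (x k) (x (k + 1)) := by
    intro k hk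
    by_cases hkj : k = j
    · exact hkj ▸ ⟨L, hL, hLint⟩
    by_cases hkj' : k = j + 1
    · exact hkj' ▸ ⟨R, hR, hRint⟩
    exact ⟨0, hzero k hk hkj hkj', intervalIntegrable_const⟩
  have hint : ∀ k < n, IntervalIntegrable f volume (x k) (x (k + 1)) := fun k hk => by
    obtain ⟨g, hfg, hg⟩ := hcell k hk
    exact (intervalIntegrable_congr_uIoo (uIoo_of_le (hle k hk) ▸ hfg)).2 hg
  rw [← sum_integral_adjacent_intervals hint,
    Finset.sum_eq_add_of_mem j (j + 1) (Finset.mem_range.2 (by omega)) (Finset.mem_range.2 hj)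
      (by omega),
    integral_congr_Ioo_of_le (hle j (by omega)) hL, integral_congr_Ioo_of_le (hle _ hj) hR]
  intro k hk hkj
  rw [integral_congr_Ioo_of_le (hle k (Finset.mem_range.1 hk))
    (hzero k (Finset.mem_range.1 hk) hkj.1 hkj.2)]
  exact intervalIntegral.integral_zero

end Cells

section Integrals

variable {x : ℕ → ℝ} {n j : ℕ}

theorem integral_interpDeriv_mul_biorthFn (hx : StrictMonoOn x (Iic n)) (u : ℝ → ℝ)
    (hj : j + 1 < n) :
    ∫ t in x 0..x n, interpDeriv x n u t * biorthFn x n (j + 1) t =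
      (u (x (j + 2)) - u (x j)) / 2 := by
  have h01 : x j < x (j + 1) := hx (mem_Iic.2 (by omega)) (mem_Iic.2 hj.le) j.lt_succ_self
  have h12 : x (j + 1) < x (j + 2) := hx (mem_Iic.2 hj.le) (mem_Iic.2 hj) (j + 1).lt_succ_self
  rw [integral_eq_add_of_eqOn_two_cells hx.monotoneOn hj
    (L := fun t => (u (x (j + 1)) - u (x j)) / (x (j + 1) - x j) *
      ((2 * (t - x j) + (t - x (j + 1))) / (x (j + 1) - x j)))
    (R := fun t => (u (x (j + 2)) - u (x (j + 1))) / (x (j + 2) - x (j + 1)) *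
      ((2 * (t - x (j + 2)) + (t - x (j + 1))) / (x (j + 1) - x (j + 2))))]
  · rw [integral_const_mul, integral_const_mul, integral_biorth_piece h01.ne, integral_symm,
      integral_biorth_piece h12.ne']
    field_simp [sub_ne_zero.2 h01.ne', sub_ne_zero.2 h12.ne']
    ring
  · intro t ht
    dsimp only
    rw [interpDeriv_of_mem_Ioo hx.monotoneOn u (by omega) ht, biorthFn_succ_of_mem_Ioo ht]
  · intro t ht
    dsimp only
    rw [interpDeriv_of_mem_Ioo hx.monotoneOn u hj ht, biorthFn_of_mem_Ioo hj ht]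
  · intro k hk hkj hkj' t ht
    dsimp only
    rw [biorthFn_eq_zero_of_mem_Ioo hx.monotoneOn hj.le hk ht (by omega) (by omega), mul_zero,
      Pi.zero_apply]
  all_goals exact Continuous.intervalIntegrable (by fun_prop) _ _

theorem integral_hatFn_mul_biorthFn (hx : StrictMonoOn x (Iic n)) (hj : j + 1 < n) :
    ∫ t in x 0..x n, hatFn x n (j + 1) t * biorthFn x n (j + 1) t = (x (j + 2) - x j) / 2 := by
  have h01 : x j < x (j + 1) := hx (mem_Iic.2 (by omega)) (mem_Iic.2 hj.le) j.lt_succ_self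
  have h12 : x (j + 1) < x (j + 2) := hx (mem_Iic.2 hj.le) (mem_Iic.2 hj) (j + 1).lt_succ_self
  rw [integral_eq_add_of_eqOn_two_cells hx.monotoneOn hj
    (L := fun t => (t - x j) / (x (j + 1) - x j) *
      ((2 * (t - x j) + (t - x (j + 1))) / (x (j + 1) - x j)))
    (R := fun t => (t - x (j + 2)) / (x (j + 1) - x (j + 2)) *
      ((2 * (t - x (j + 2)) + (t - x (j + 1))) / (x (j + 1) - x (j + 2))))]
  · rw [integral_hat_piece_mul_biorth_piece h01.ne, integral_symm,
      integral_hat_piece_mul_biorth_piece h12.ne']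
    ring
  · intro t ht
    dsimp only
    rw [hatFn_succ_of_mem_Ioo ht, biorthFn_succ_of_mem_Ioo ht]
  · intro t ht
    dsimp only
    rw [hatFn_of_mem_Ioo hj ht, biorthFn_of_mem_Ioo hj ht, ← neg_div_neg_eq, neg_sub, neg_sub]
  · intro k hk hkj hkj' t ht
    dsimp only
    rw [biorthFn_eq_zero_of_mem_Ioo hx.monotoneOn hj.le hk ht (by omega) (by omega), mul_zero,
      Pi.zero_apply]
  all_goals exact Continuous.intervalIntegrable (by fun_prop) _ _

end Integrals

theorem recGrad_interior_general (n : ℕ) (x : ℕ → ℝ)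
    (hx : ∀ i < n, x i < x (i+1)) (u : ℝ → ℝ) :
    ∀ i : ℕ, 1 ≤ i → i < n →
      recGrad x n u i = (u (x (i+1)) - u (x (i-1))) / (x (i+1) - x (i-1)) := by
  intro i hi hin
  obtain ⟨j, rfl⟩ : ∃ j, i = j + 1 := ⟨i - 1, by omega⟩
  have hmono : StrictMonoOn x (Iic n) := strictMonoOn_Iic_of_lt_succ hx
  have hlt : x j < x (j + 2) := hmono (mem_Iic.2 (by omega)) (mem_Iic.2 hin) (by omega)
  rw [recGrad, integral_interpDeriv_mul_biorthFn hmono u hin,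
    integral_hatFn_mul_biorthFn hmono hin, Nat.add_sub_cancel]
  field_simp [sub_ne_zero.2 hlt.ne']

/-- Theorem 1, interior case: for any `u : ℝ → ℝ` and every interior index
`1 ≤ i ≤ n-1`, `g_i = (u(x_{i+1}) - u(x_{i-1})) / (x_{i+1} - x_{i-1})`. -/
theorem recGrad_interior (n : ℕ) (x : ℕ → ℝ) (hn : 2 ≤ n)
    (hx : ∀ i < n, x i < x (i+1)) (u : ℝ → ℝ) :
    ∀ i : ℕ, 1 ≤ i → i < n →
      recGrad x n u i = (u (x (i+1)) - u (x (i-1))) / (x (i+1) - x (i-1)) :=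
  recGrad_interior_general n x hx u
end

section
/- (Corollary, uniform grid endpoint error for quadratics) Suppose the partition is uniform with stepsize h > 0 (x_i = x_0 + i h) and x_0 = 0. Let u(x) = a x² + b x + c with a, b, c ∈ ℝ. Then the recovered gradient values at the endpoints satisfy |g_0 − u'(x_0)| = |a| h and |g_n − u'(x_n)| = |a| h. -/
open intervalIntegral

/-!
`λ_0` and `λ_n` are supported on the first and last element, where `u_h'` is the constant slope
of `u`. Since `∫ λ_i = ∫ φ_i λ_i = (element length)/2` on such an element, `g_0` and `g_n` are
exactly the slopes of `u` on the first and last elements. For `u = a t² + b t + c` the slope on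
`[p, q]` is `a (p + q) + b`, which differs from `u'(p)` by `a (q - p)`.
-/

open Set

lemma integral_mul_indicator_Ico {a b p q : ℝ} (hap : a ≤ p) (hpq : p ≤ q) (hqb : q ≤ b)
    (F g : ℝ → ℝ) :
    ∫ t in a..b, F t * (Ico p q).indicator g t = ∫ t in p..q, F t * g t := by
  simp_rw [← indicator_mul_right]
  rw [integral_of_le (hap.trans (hpq.trans hqb)), integral_of_le hpq,
    ← MeasureTheory.integral_Icc_eq_integral_Ioc,
    MeasureTheory.setIntegral_indicator measurableSet_Ico,
    inter_eq_right.2 (Ico_subset_Icc_self.trans (Icc_subset_Icc hap hqb)),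
    MeasureTheory.integral_Ico_eq_integral_Ioo, MeasureTheory.integral_Ioc_eq_integral_Ioo]

lemma slope_quadratic (a b c : ℝ) {p q : ℝ} (hpq : p ≠ q) :
    slope (fun t => a * t^2 + b * t + c) p q = a * (p + q) + b := by
  rw [slope_def_field, div_eq_iff (sub_ne_zero.2 hpq.symm)]
  ring

section ElementIntegrals

/- `φ_i` and `λ_i` on the element joining the node `p = x_i` to its neighbour `q`
(`q = x_{i+1}` or `q = x_{i-1}`). -/
noncomputable def localHat (p q : ℝ) (t : ℝ) : ℝ := (q - t) / (q - p)

noncomputable def localBiorth (p q : ℝ) (t : ℝ) : ℝ := (2 * (t - q) + (t - p)) / (p - q)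

variable {p q : ℝ}

lemma integral_localBiorth (hpq : p ≠ q) : ∫ t in p..q, localBiorth p q t = (q - p) / 2 := by
  rw [integral_eq_sub_of_hasDerivAt (f := fun t => ((t - q)^2 + (t - p)^2 / 2) / (p - q))]
  · field_simp
    ring
  · intro t _
    refine (((((hasDerivAt_id' t).sub_const q).pow 2).add
      ((((hasDerivAt_id' t).sub_const p).pow 2).div_const 2)).div_const (p - q)).congr_deriv ?_
    norm_num [localBiorth]
  · exact (by unfold localBiorth; fun_prop : Continuous _).intervalIntegrable _ _

lemma integral_localHat_mul_localBiorth (hpq : p ≠ q) :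
    ∫ t in p..q, localHat p q t * localBiorth p q t = (q - p) / 2 := by
  have hqp : q - p ≠ 0 := sub_ne_zero.2 hpq.symm
  rw [integral_eq_sub_of_hasDerivAt
    (f := fun t => ((q - p) * (q - t)^2 / 2 - (q - t)^3) / (q - p)^2)]
  · field_simp
    ring
  · intro t _
    refine (((((hasDerivAt_id' t).const_sub q).pow 2).const_mul (q - p) |>.div_const 2).sub
      (((hasDerivAt_id' t).const_sub q).pow 3)).div_const ((q - p)^2) |>.congr_deriv ?_
    rw [localHat, localBiorth, div_mul_div_comm,
      div_eq_div_iff (by simp [hqp]) (mul_ne_zero hqp (sub_ne_zero.2 hpq))]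
    norm_num
    ring
  · exact (by unfold localHat localBiorth; fun_prop : Continuous _).intervalIntegrable _ _

lemma integral_mul_localBiorth_div_eq {F G : ℝ → ℝ} {s : ℝ} (hpq : p ≠ q)
    (hF : EqOn F (fun _ => s) (uIoo p q)) (hG : EqOn G (localHat p q) (uIcc p q)) :
    (∫ t in p..q, F t * localBiorth p q t) / (∫ t in p..q, G t * localBiorth p q t) = s := by
  have hnum : ∫ t in p..q, F t * localBiorth p q t = s * ((q - p) / 2) := by
    rw [integral_congr_uIoo fun t ht => congrArg (· * _) (hF ht), integral_const_mul,
      integral_localBiorth hpq]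
  have hden : ∫ t in p..q, G t * localBiorth p q t = (q - p) / 2 := by
    rw [integral_congr fun t ht => congrArg (· * _) (hG ht)]
    exact integral_localHat_mul_localBiorth hpq
  rw [hnum, hden, mul_div_cancel_right₀ _ (div_ne_zero (sub_ne_zero.2 hpq.symm) two_ne_zero)]

end ElementIntegrals

section EndpointRecovery

variable {x : ℕ → ℝ} {n : ℕ}

lemma biorthFn_zero_eq_indicator (hn : 0 < n) :
    biorthFn x n 0 = (Ico (x 0) (x 1)).indicator (localBiorth (x 0) (x 1)) := by
  ext t
  by_cases ht : t ∈ Ico (x 0) (x 1)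
  · simp [biorthFn, localBiorth, hn, ht.1, ht.2]
  · simp_all [biorthFn]

lemma biorthFn_self_eq_indicator (hn : 0 < n) :
    biorthFn x n n = (Ico (x (n-1)) (x n)).indicator (localBiorth (x n) (x (n-1))) := by
  ext t
  by_cases ht : t ∈ Ico (x (n-1)) (x n)
  · simp [biorthFn, localBiorth, hn, ht.1, ht.2]
  · simp_all [biorthFn]

lemma hatFn_zero_eqOn (hn : 0 < n) :
    EqOn (hatFn x n 0) (localHat (x 0) (x 1)) (Icc (x 0) (x 1)) := by
  intro t ht
  simp [hatFn, localHat, hn, ht.1, ht.2]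

lemma hatFn_self_eqOn (hn : 0 < n) :
    EqOn (hatFn x n n) (localHat (x n) (x (n-1))) (Icc (x (n-1)) (x n)) := by
  intro t ht
  rw [hatFn, if_pos ⟨hn, ht.1, ht.2⟩, localHat, ← neg_sub t, ← neg_sub (x n), neg_div_neg_eq]

lemma interpDeriv_eq_slope (hx : ∀ i < n, x i < x (i+1)) (u : ℝ → ℝ) {j : ℕ} (hj : j < n)
    {t : ℝ} (ht : t ∈ Ioo (x j) (x (j+1))) : interpDeriv x n u t = slope u (x j) (x (j+1)) := by
  have hmono : MonotoneOn x (Iic n) := (strictMonoOn_Iic_of_lt_succ hx).monotoneOn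
  rw [interpDeriv, Finset.sum_eq_single_of_mem j (Finset.mem_range.2 hj), if_pos (mem_Ioo.1 ht),
    slope_def_field]
  intro i hi hij
  have hin := Finset.mem_range.1 hi
  rw [if_neg]
  rintro ⟨hit, hti⟩
  rcases hij.lt_or_gt with hlt | hgt
  · have := hmono (show i + 1 ∈ Iic n by simp; omega) (show j ∈ Iic n by simp; omega) hlt
    linarith [ht.1]
  · have := hmono (show j + 1 ∈ Iic n by simp; omega) (show i ∈ Iic n by simp; omega) hgt
    linarith [ht.2]

lemma recGrad_zero_eq_slope (hx : ∀ i < n, x i < x (i+1)) (hn : 0 < n) (u : ℝ → ℝ) :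
    recGrad x n u 0 = slope u (x 0) (x 1) := by
  have hx01 : x 0 < x 1 := hx 0 hn
  have hx1n : x 1 ≤ x n :=
    (strictMonoOn_Iic_of_lt_succ hx).monotoneOn (by simp; omega) (by simp) hn
  rw [recGrad, biorthFn_zero_eq_indicator hn, integral_mul_indicator_Ico le_rfl hx01.le hx1n,
    integral_mul_indicator_Ico le_rfl hx01.le hx1n]
  refine integral_mul_localBiorth_div_eq hx01.ne (fun t ht => ?_) ?_
  · rw [uIoo_of_le hx01.le] at ht
    exact interpDeriv_eq_slope hx u hn ht
  · rw [uIcc_of_le hx01.le]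
    exact hatFn_zero_eqOn hn

lemma recGrad_self_eq_slope (hx : ∀ i < n, x i < x (i+1)) (hn : 0 < n) (u : ℝ → ℝ) :
    recGrad x n u n = slope u (x (n-1)) (x n) := by
  have hlast : n - 1 + 1 = n := Nat.sub_add_cancel hn
  have hxn : x (n-1) < x n := hlast ▸ hx (n-1) (by omega)
  have hx0n : x 0 ≤ x (n-1) :=
    (strictMonoOn_Iic_of_lt_succ hx).monotoneOn (by simp) (by simp) (Nat.zero_le _)
  rw [recGrad, biorthFn_self_eq_indicator hn, integral_mul_indicator_Ico hx0n hxn.le le_rfl,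
    integral_mul_indicator_Ico hx0n hxn.le le_rfl, integral_symm, integral_symm (x n),
    neg_div_neg_eq, slope_comm]
  refine integral_mul_localBiorth_div_eq hxn.ne' (fun t ht => ?_) (fun t ht => ?_)
  · rw [uIoo_of_ge hxn.le] at ht
    have := interpDeriv_eq_slope hx u (j := n-1) (by omega) (by rwa [hlast])
    rwa [hlast, slope_comm] at this
  · rw [uIcc_of_ge hxn.le] at ht
    exact hatFn_self_eqOn hn ht

end EndpointRecovery

/-- uniform grid endpoint error for quadratics: on a uniform grid with
stepsize `h > 0` and `x_0 = 0` (so `x_i = i h`), for `u(x) = a x² + b x + c` one has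
`|g_0 - u'(x_0)| = |a| h` and `|g_n - u'(x_n)| = |a| h`. -/
theorem recGrad_quadratic_endpoint_error_uniform (n : ℕ) (x : ℕ → ℝ) (hn : 2 ≤ n)
    (hx : ∀ i < n, x i < x (i+1)) (h : ℝ) (hpos : 0 < h)
    (hgrid : ∀ i : ℕ, i ≤ n → x i = (i : ℝ) * h) (a b c : ℝ) :
    |recGrad x n (fun t => a * t^2 + b * t + c) 0 - (2 * a * x 0 + b)| = |a| * h ∧
    |recGrad x n (fun t => a * t^2 + b * t + c) n - (2 * a * x n + b)| = |a| * h := by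
  have hn0 : 0 < n := by omega
  have hfirst : x 1 - x 0 = h := by
    rw [hgrid 1 (by omega), hgrid 0 (by omega)]
    push_cast
    ring
  have hlast : x n - x (n-1) = h := by
    rw [hgrid n le_rfl, hgrid (n-1) (by omega), Nat.cast_sub (by omega)]
    push_cast
    ring
  rw [recGrad_zero_eq_slope hx hn0, recGrad_self_eq_slope hx hn0,
    slope_quadratic a b c (hx 0 hn0).ne, slope_quadratic a b c (by linarith : x (n-1) < x n).ne]
  constructor
  · rw [show a * (x 0 + x 1) + b - (2 * a * x 0 + b) = a * (x 1 - x 0) by ring, hfirst,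
      abs_mul, abs_of_pos hpos]
  · rw [show a * (x (n-1) + x n) + b - (2 * a * x n + b) = -(a * (x n - x (n-1))) by ring,
      abs_neg, hlast, abs_mul, abs_of_pos hpos]
end
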